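/- Let {X_n} be i.i.d. standard normal random variables. Then (max_{1≤k≤n} X_k)/√(2 log n) → 1 almost surely. -/

import Mathlib

open MeasureTheory ProbabilityTheory Filter
open scoped ENNReal

/-- `log x = ln (e ∨ x)` as in the paper. -/
noncomputable def Log (x : ℝ) : ℝ := Real.log (max (Real.exp 1) x)

/-- `pmax X n ω = max_{1 ≤ k ≤ n} X_k(ω)` (indexed `0,…,n-1`), junk value at `n = 0`. -/
noncomputable def pmax {Ω : Type*} (X : ℕ → Ω → ℝ) (n : ℕ) (ω : Ω) : ℝ :=
  if h : n = 0 then X 0 ω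
  else (Finset.range n).sup' (Finset.nonempty_range_iff.mpr h) fun k => X k ω

/-!
For `a > 1`, the Gaussian tail bound `P(X > t) ≤ exp (-t²/2)` gives
`P(X_n > a √(2 log n)) ≤ n^(-a²)`, which is summable; by Borel–Cantelli
`X_n ≤ a √(2 log n)` eventually, and then the running maximum is eventually below `b √(2 log n)`
for every `b > a`.

For `0 ≤ a < 1`, independence gives
`P(max_{k<n} X_k ≤ t) = P(X ≤ t)^n ≤ exp (-n P(X > t))` with `t = a √(2 log n)`, and the crude
bound `P(X > t) ≥ φ(t + 1)` makes `n P(X > t)` grow like a power of `n`, so it eventually exceeds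
`2 log n`. These probabilities are then at most `n^(-2)` and Borel–Cantelli applies again.
Taking `a`, `b` rational leaves countably many null sets.
-/

open Real

theorem one_le_Log (x : ℝ) : 1 ≤ Log x :=
  (log_exp 1).ge.trans (Real.log_le_log (exp_pos 1) (le_max_left _ x))

theorem Log_monotone : Monotone Log := fun _ _ h =>
  Real.log_le_log (lt_of_lt_of_le (exp_pos 1) (le_max_left _ _)) (max_le_max le_rfl h)

theorem Log_of_exp_one_le {x : ℝ} (hx : exp 1 ≤ x) : Log x = Real.log x := by
  rw [Log, max_eq_right hx]

theorem tendsto_Log_atTop : Tendsto Log atTop atTop :=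
  tendsto_log_atTop.comp (tendsto_atTop_mono (le_max_right _) tendsto_id)

theorem sqrt_two_mul_Log_pos (x : ℝ) : 0 < √(2 * Log x) :=
  sqrt_pos.2 (by linarith [one_le_Log x])

theorem tendsto_sqrt_two_mul_Log_atTop : Tendsto (fun x => √(2 * Log x)) atTop atTop :=
  tendsto_sqrt_atTop.comp (tendsto_Log_atTop.const_mul_atTop two_pos)

theorem exp_neg_mul_sqrt_two_mul_Log_sq_le_rpow {x : ℝ} (hx : 0 < x) (a : ℝ) :
    exp (-(a * √(2 * Log x)) ^ 2 / 2) ≤ x ^ (-a ^ 2) := by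
  have hlog : Real.log x ≤ Log x := Real.log_le_log hx (le_max_right _ _)
  rw [rpow_def_of_pos hx, exp_le_exp, mul_pow, sq_sqrt (by linarith [one_le_Log x])]
  nlinarith [sq_nonneg a]

theorem gaussianReal_Ioi_le_exp {t : ℝ} (ht : 0 ≤ t) :
    gaussianReal 0 1 (Set.Ioi t) ≤ ENNReal.ofReal (exp (-t ^ 2 / 2)) := by
  rw [gaussianReal_apply_eq_integral 0 one_ne_zero]
  apply ENNReal.ofReal_le_ofReal
  have hint : Integrable (fun x => exp (-t ^ 2 / 2) * gaussianPDFReal t 1 x) :=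
    (integrable_gaussianPDFReal t 1).const_mul _
  -- on `(t, ∞)`, `x² ≥ t² + (x - t)²`: compare with the density of `N(t, 1)`
  calc ∫ x in Set.Ioi t, gaussianPDFReal 0 1 x
      ≤ ∫ x in Set.Ioi t, exp (-t ^ 2 / 2) * gaussianPDFReal t 1 x := by
        refine setIntegral_mono_on (integrable_gaussianPDFReal 0 1).integrableOn
          hint.integrableOn measurableSet_Ioi fun x (hx : t < x) => ?_
        simp only [gaussianPDFReal, NNReal.coe_one, mul_one, sub_zero]
        rw [mul_left_comm, ← exp_add]
        gcongr
        nlinarith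
    _ ≤ ∫ x, exp (-t ^ 2 / 2) * gaussianPDFReal t 1 x :=
        setIntegral_le_integral hint (ae_of_all _ fun x =>
          mul_nonneg (exp_nonneg _) (gaussianPDFReal_nonneg _ _ _))
    _ = exp (-t ^ 2 / 2) := by
        rw [integral_const_mul, integral_gaussianPDFReal_eq_one t one_ne_zero, mul_one]

theorem ofReal_le_gaussianReal_Ioi {t : ℝ} (ht : 0 ≤ t) :
    ENNReal.ofReal ((√(2 * π))⁻¹ * exp (-(t + 1) ^ 2 / 2)) ≤ gaussianReal 0 1 (Set.Ioi t) := by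
  refine le_trans ?_ (measure_mono (Set.Ioc_subset_Ioi_self : Set.Ioc t (t + 1) ⊆ _))
  rw [gaussianReal_apply_eq_integral 0 one_ne_zero]
  apply ENNReal.ofReal_le_ofReal
  set c := (√(2 * π))⁻¹ * exp (-(t + 1) ^ 2 / 2)
  have hvol : volume (Set.Ioc t (t + 1)) = 1 := by simp [Real.volume_Ioc]
  -- the density is at least its value at `t + 1` on the unit interval `(t, t + 1]`
  calc c = ∫ _ in Set.Ioc t (t + 1), c := by simp [measureReal_def, hvol]
    _ ≤ ∫ x in Set.Ioc t (t + 1), gaussianPDFReal 0 1 x := by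
        refine setIntegral_mono_on (integrableOn_const (by simp [hvol]))
          (integrable_gaussianPDFReal 0 1).integrableOn measurableSet_Ioc fun x hx => ?_
        obtain ⟨hx1, hx2⟩ := hx
        simp only [c, gaussianPDFReal, NNReal.coe_one, mul_one, sub_zero]
        gcongr
        nlinarith

theorem measure_compl_le_exp_neg_measureReal {α : Type*} [MeasurableSpace α] (ν : Measure α)
    [IsProbabilityMeasure ν] {s : Set α} (hs : MeasurableSet s) :
    ν sᶜ ≤ ENNReal.ofReal (exp (-ν.real s)) := by
  rw [← ofReal_measureReal, measureReal_compl hs, probReal_univ]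
  exact ENNReal.ofReal_le_ofReal (one_sub_le_exp_neg _)

theorem gaussianReal_Iic_pow_le {t : ℝ} (ht : 0 ≤ t) (n : ℕ) :
    gaussianReal 0 1 (Set.Iic t) ^ n ≤
      ENNReal.ofReal (exp (-(n * ((√(2 * π))⁻¹ * exp (-(t + 1) ^ 2 / 2))))) := by
  have htail := (ENNReal.ofReal_le_iff_le_toReal (measure_ne_top _ _)).1 (ofReal_le_gaussianReal_Ioi ht)
  have hIic := measure_compl_le_exp_neg_measureReal (gaussianReal 0 1) (measurableSet_Ioi (a := t))
  rw [Set.compl_Ioi] at hIic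
  calc gaussianReal 0 1 (Set.Iic t) ^ n
      ≤ ENNReal.ofReal (exp (-(gaussianReal 0 1).real (Set.Ioi t))) ^ n := by gcongr
    _ = ENNReal.ofReal (exp (-(n * (gaussianReal 0 1).real (Set.Ioi t)))) := by
        rw [← ENNReal.ofReal_pow (exp_nonneg _), ← exp_nat_mul, mul_neg]
    _ ≤ _ := by
        gcongr
        exact htail

theorem ae_eventually_notMem_of_summable {Ω : Type*} [MeasurableSpace Ω] {μ : Measure Ω}
    {s : ℕ → Set Ω} {g : ℕ → ℝ} (hg : Summable g)
    (h : ∀ᶠ n in atTop, μ (s n) ≤ ENNReal.ofReal (g n)) :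
    ∀ᵐ ω ∂μ, ∀ᶠ n in atTop, ω ∉ s n := by
  obtain ⟨N, hN⟩ := eventually_atTop.1 h
  have htail : ∑' n, μ (s (n + N)) ≠ ∞ :=
    ne_top_of_le_ne_top
      (ENNReal.tsum_coe_ne_top_iff_summable.2 ((summable_nat_add_iff N).2 hg).toNNReal)
      (ENNReal.tsum_le_tsum fun n => hN _ (Nat.le_add_left N n))
  filter_upwards [ae_eventually_notMem htail] with ω hω
  rwa [← map_add_atTop_eq_nat N, eventually_map]

theorem measure_preimage_of_map_eq {Ω β : Type*} [MeasurableSpace Ω] [MeasurableSpace β]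
    {μ : Measure Ω} {ν : Measure β} [NeZero ν] {f : Ω → β} (hf : μ.map f = ν) {s : Set β}
    (hs : MeasurableSet s) : μ (f ⁻¹' s) = ν s := by
  have hfm : AEMeasurable f μ := .of_map_ne_zero (hf ▸ NeZero.ne ν)
  rw [← hf, Measure.map_apply_of_aemeasurable hfm hs]

section RunningMax

variable {Ω : Type*} {X : ℕ → Ω → ℝ} {ω : Ω} {n : ℕ}

theorem le_pmax {k : ℕ} (hk : k < n) : X k ω ≤ pmax X n ω := by
  rw [pmax, dif_neg (by omega)]
  exact Finset.le_sup' (fun j => X j ω) (Finset.mem_range.2 hk)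

theorem pmax_le {c : ℝ} (hn : n ≠ 0) (h : ∀ k < n, X k ω ≤ c) : pmax X n ω ≤ c := by
  rw [pmax, dif_neg hn]
  exact Finset.sup'_le _ _ fun k hk => h k (Finset.mem_range.1 hk)

theorem eventually_pmax_le_mul {S : ℕ → ℝ} (hS : Tendsto S atTop atTop) (hSmono : Monotone S)
    {a b : ℝ} (ha : 0 ≤ a) (hab : a < b) (h : ∀ᶠ n in atTop, X n ω ≤ a * S n) :
    ∀ᶠ n in atTop, pmax X n ω ≤ b * S n := by
  obtain ⟨N, hN⟩ := eventually_atTop.1 h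
  have hba : 0 < b - a := sub_pos.2 hab
  filter_upwards [hS.eventually_ge_atTop (pmax X N ω / (b - a)), hS.eventually_ge_atTop 0,
    eventually_gt_atTop 0] with n hCn hSn hn
  refine pmax_le hn.ne' fun k hk => ?_
  rcases lt_or_ge k N with hkN | hkN
  · -- the finitely many early terms are absorbed by `(b - a) S n → ∞`
    have hC : pmax X N ω ≤ (b - a) * S n := by rwa [div_le_iff₀' hba] at hCn
    nlinarith [le_pmax (X := X) (ω := ω) hkN]
  · nlinarith [hN k hkN, hSmono hk.le]

end RunningMax

theorem measure_forall_lt_mem_eq_pow {Ω β : Type*} [MeasurableSpace Ω] [MeasurableSpace β]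
    {μ : Measure Ω} {ν : Measure β} [NeZero ν] {X : ℕ → Ω → β} (hindep : iIndepFun X μ)
    (hX : ∀ k, μ.map (X k) = ν) {s : Set β} (hs : MeasurableSet s) (n : ℕ) :
    μ {ω | ∀ k < n, X k ω ∈ s} = ν s ^ n := by
  have hset : {ω | ∀ k < n, X k ω ∈ s} = ⋂ k ∈ Finset.range n, X k ⁻¹' s := by
    ext ω; simp
  rw [hset, hindep.measure_inter_preimage_eq_mul _ fun _ _ => hs]
  simp [measure_preimage_of_map_eq (hX _) hs]

theorem eventually_two_mul_le_exp_mul_gaussian_bound {a : ℝ} (ha0 : 0 ≤ a) (ha1 : a < 1) :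
    ∀ᶠ L in atTop, 2 * L ≤ exp L * ((√(2 * π))⁻¹ * exp (-(a * √(2 * L) + 1) ^ 2 / 2)) := by
  set ε := 1 - a
  have hε : 0 < ε := sub_pos.2 ha1
  have hsqrt : ∀ᶠ L in atTop, √(2 * L) + 1 / 2 ≤ ε * L / 2 := by
    filter_upwards [eventually_ge_atTop 1, eventually_ge_atTop (256 / ε ^ 2)] with L hL1 hL
    set s := √(2 * L)
    have hs0 : 0 ≤ s := sqrt_nonneg _
    have hs2 : s ^ 2 = 2 * L := sq_sqrt (by linarith)
    have hεs : 16 ≤ ε * s := by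
      have : 256 ≤ (ε * s) ^ 2 := by
        rw [mul_pow, hs2]; rw [div_le_iff₀' (by positivity)] at hL; linarith
      nlinarith [mul_nonneg hε.le hs0]
    nlinarith [mul_le_mul_of_nonneg_right hεs hs0]
  have hexp : ∀ᶠ L in atTop, 6 * L ≤ exp (ε / 2 * L) := by
    filter_upwards [(isLittleO_pow_exp_pos_mul_atTop 1 (half_pos hε)).bound
      (by norm_num : (0 : ℝ) < 1 / 6), eventually_ge_atTop 0] with L hL hL0
    simp only [pow_one, norm_eq_abs, abs_of_nonneg hL0, abs_of_pos (exp_pos _)] at hL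
    linarith
  filter_upwards [hsqrt, hexp, eventually_ge_atTop 0] with L hsqrt hexp hL0
  set s := √(2 * L)
  have hs2 : s ^ 2 = 2 * L := sq_sqrt (by linarith)
  have hpi : 1 / 3 ≤ (√(2 * π))⁻¹ := by
    rw [one_div]
    refine inv_anti₀ (by positivity) (sqrt_le_iff.2 ⟨by norm_num, by nlinarith [pi_le_four]⟩)
  have hsq : (a * s + 1) ^ 2 / 2 = a ^ 2 * L + a * s + 1 / 2 := by
    linear_combination (a ^ 2 / 2) * hs2
  have hexponent : ε / 2 * L ≤ L + -(a * s + 1) ^ 2 / 2 := by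
    nlinarith [mul_nonneg (mul_nonneg ha0 hε.le) hL0, mul_nonneg hε.le (sqrt_nonneg (2 * L))]
  calc 2 * L ≤ 1 / 3 * exp (ε / 2 * L) := by linarith
    _ ≤ (√(2 * π))⁻¹ * exp (L + -(a * s + 1) ^ 2 / 2) := by gcongr
    _ = _ := by rw [exp_add]; ring_nf

theorem ae_eventually_le_mul_sqrt_two_mul_Log {Ω : Type*} [MeasurableSpace Ω] {μ : Measure Ω}
    {X : ℕ → Ω → ℝ} (hX : ∀ n, μ.map (X n) = gaussianReal 0 1) {a : ℝ} (ha : 1 < a) :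
    ∀ᵐ ω ∂μ, ∀ᶠ n : ℕ in atTop, X n ω ≤ a * √(2 * Log n) := by
  have hsum : Summable fun n : ℕ => (n : ℝ) ^ (-a ^ 2) := summable_nat_rpow.2 (by nlinarith)
  have hbound : ∀ᶠ n : ℕ in atTop,
      μ (X n ⁻¹' Set.Ioi (a * √(2 * Log n))) ≤ ENNReal.ofReal ((n : ℝ) ^ (-a ^ 2)) := by
    filter_upwards [eventually_gt_atTop 0] with n hn
    rw [measure_preimage_of_map_eq (hX n) measurableSet_Ioi]
    refine (gaussianReal_Ioi_le_exp (by positivity)).trans (ENNReal.ofReal_le_ofReal ?_)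
    exact exp_neg_mul_sqrt_two_mul_Log_sq_le_rpow (Nat.cast_pos.2 hn) a
  filter_upwards [ae_eventually_notMem_of_summable hsum hbound] with ω hω
  simpa using hω

theorem ae_eventually_mul_sqrt_two_mul_Log_lt_pmax {Ω : Type*} [MeasurableSpace Ω]
    {μ : Measure Ω} {X : ℕ → Ω → ℝ} (hindep : iIndepFun X μ)
    (hX : ∀ n, μ.map (X n) = gaussianReal 0 1) {a : ℝ} (ha : a < 1) :
    ∀ᵐ ω ∂μ, ∀ᶠ n : ℕ in atTop, a * √(2 * Log n) < pmax X n ω := by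
  wlog ha0 : 0 ≤ a generalizing a
  · filter_upwards [this zero_lt_one le_rfl] with ω hω
    filter_upwards [hω] with n hn
    nlinarith [sqrt_nonneg (2 * Log n)]
  have hsum : Summable fun n : ℕ => (n : ℝ) ^ (-2 : ℝ) := summable_nat_rpow.2 (by norm_num)
  have hbound : ∀ᶠ n : ℕ in atTop, μ {ω | ∀ k < n, X k ω ∈ Set.Iic (a * √(2 * Log n))} ≤
      ENNReal.ofReal ((n : ℝ) ^ (-2 : ℝ)) := by
    have hlarge := tendsto_Log_atTop.comp tendsto_natCast_atTop_atTop
      |>.eventually (eventually_two_mul_le_exp_mul_gaussian_bound ha0 ha)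
    filter_upwards [hlarge, eventually_ge_atTop 3] with n hn hn3
    have hen : exp 1 ≤ (n : ℝ) := by
      have : (3 : ℝ) ≤ n := by exact_mod_cast hn3
      linarith [exp_one_lt_d9]
    have hn0 : (0 : ℝ) < n := (exp_pos 1).trans_le hen
    simp only [Function.comp_apply, Log_of_exp_one_le hen, exp_log hn0] at hn
    rw [measure_forall_lt_mem_eq_pow hindep hX measurableSet_Iic, Log_of_exp_one_le hen]
    refine (gaussianReal_Iic_pow_le (by positivity) n).trans (ENNReal.ofReal_le_ofReal ?_)
    rw [rpow_def_of_pos hn0, exp_le_exp]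
    linarith
  filter_upwards [ae_eventually_notMem_of_summable hsum hbound] with ω hω
  filter_upwards [hω, eventually_gt_atTop 0] with n hn hn0
  simp only [Set.mem_Iic, not_forall, not_le] at hn
  obtain ⟨k, hk, hlt⟩ := hn
  exact hlt.trans_le (le_pmax hk)

theorem tendsto_of_forall_rat_eventually {α : Type*} {l : Filter α} {f : α → ℝ} {c : ℝ}
    (hlow : ∀ q : ℚ, (q : ℝ) < c → ∀ᶠ x in l, (q : ℝ) < f x)
    (hup : ∀ q : ℚ, c < q → ∀ᶠ x in l, f x ≤ q) : Tendsto f l (nhds c) := by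
  refine tendsto_order.2 ⟨fun b hb => ?_, fun b hb => ?_⟩
  · obtain ⟨q, hbq, hqc⟩ := exists_rat_btwn hb
    filter_upwards [hlow q hqc] with x hx using hbq.trans hx
  · obtain ⟨q, hcq, hqb⟩ := exists_rat_btwn hb
    filter_upwards [hup q hcq] with x hx using hx.trans_lt hqb

theorem stmt19_general {Ω : Type*} [MeasurableSpace Ω] (μ : Measure Ω)
    (X : ℕ → Ω → ℝ)
    (hindep : iIndepFun X μ)
    (hgauss : ∀ n, μ.map (X n) = gaussianReal 0 1) :
    ∀ᵐ ω ∂μ,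
      Tendsto (fun n : ℕ => pmax X n ω / Real.sqrt (2 * Log n)) atTop (nhds 1) := by
  have hS := tendsto_sqrt_two_mul_Log_atTop.comp tendsto_natCast_atTop_atTop
  have hSmono : Monotone fun n : ℕ => √(2 * Log n) := fun m n h =>
    sqrt_le_sqrt (by gcongr; exact Log_monotone (Nat.cast_le.2 h))
  have hlow : ∀ᵐ ω ∂μ, ∀ q : ℚ, (q : ℝ) < 1 →
      ∀ᶠ n : ℕ in atTop, q * √(2 * Log n) < pmax X n ω :=
    ae_all_iff.2 fun q => eventually_imp_distrib_left.2 fun hq =>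
      ae_eventually_mul_sqrt_two_mul_Log_lt_pmax hindep hgauss hq
  have hup : ∀ᵐ ω ∂μ, ∀ q : ℚ, 1 < (q : ℝ) →
      ∀ᶠ n : ℕ in atTop, pmax X n ω ≤ q * √(2 * Log n) := by
    refine ae_all_iff.2 fun q => eventually_imp_distrib_left.2 fun hq => ?_
    obtain ⟨a, h1a, haq⟩ := exists_between hq
    filter_upwards [ae_eventually_le_mul_sqrt_two_mul_Log hgauss h1a] with ω hω
    exact eventually_pmax_le_mul hS hSmono (by linarith) haq hω
  filter_upwards [hlow, hup] with ω hlow hup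
  refine tendsto_of_forall_rat_eventually (fun q hq => ?_) (fun q hq => ?_)
  · filter_upwards [hlow q hq] with n hn using (lt_div_iff₀ (sqrt_two_mul_Log_pos n)).2 hn
  · filter_upwards [hup q hq] with n hn using (div_le_iff₀ (sqrt_two_mul_Log_pos n)).2 hn

theorem stmt19 {Ω : Type*} [MeasurableSpace Ω] (μ : Measure Ω) [IsProbabilityMeasure μ]
    (X : ℕ → Ω → ℝ) (hmeas : ∀ n, Measurable (X n))
    (hindep : iIndepFun X μ)
    (hident : ∀ n, IdentDistrib (X n) (X 0) μ μ)
    (hgauss : ∀ n, μ.map (X n) = gaussianReal 0 1) :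
    ∀ᵐ ω ∂μ,
      Tendsto (fun n : ℕ => pmax X n ω / Real.sqrt (2 * Log n)) atTop (nhds 1) :=
  stmt19_general μ X hindep hgauss
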